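/- arXiv:1802.10564 — 3 statements merged into one kernel-verified Lean document; each statement's English description precedes it below -/
import Mathlib

section
/- For all real a > 1/2 and b > 0, the integral f(a,b) = ∫_0^∞ (x²+1)^(−a) · (φ(x) + √(φ(x)))^(−1/2) dx, where φ(x) = 1 + (4/b²)·(x/(x²+1))², satisfies the identity f(a,b) = 2^(−a) · b · ∫_0^1 [ (1 + √(1−s²))^(a−1) + (1 − √(1−s²))^(a−1) ] · √(1 − b/√(b²+s²)) / ( s·√(1−s²) ) ds. -/
open Real MeasureTheory

noncomputable def φ (b x : ℝ) : ℝ := 1 + (4 / b ^ 2) * (x / (x ^ 2 + 1)) ^ 2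

noncomputable def f (a b : ℝ) : ℝ :=
  ∫ x in Set.Ioi (0 : ℝ),
    (x ^ 2 + 1) ^ (-a) * (φ b x + Real.sqrt (φ b x)) ^ (-(1 / 2) : ℝ)

open Set

/-!
The map `x ↦ s = 2x/(x²+1)` sends both `(0,1)` and `(1,∞)` bijectively onto `(0,1)`. On either
branch `x/(x²+1) = s/2`, so `φ = 1 + s²/b²` and `(φ + √φ)^(-1/2) = (b/s)·√(1 - b/√(b²+s²))`, while
`x² + 1 = 2/(1 ± √(1-s²))` and `|dx/ds| = (1 ∓ √(1-s²))/(s²√(1-s²))` (upper sign for `x < 1`).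
Substituting on each half of `(0,∞)` and adding gives the two terms `(1 ± √(1-s²))^(a-1)`.
-/

lemma one_le_φ (b x : ℝ) : 1 ≤ φ b x :=
  le_add_of_nonneg_right (by positivity)

lemma continuous_φ (b : ℝ) : Continuous (φ b) := by
  unfold φ
  fun_prop (disch := intro x; positivity)

lemma φ_eq_of_div_sq_add_one_eq {b x s : ℝ} (h : x / (x ^ 2 + 1) = s / 2) :
    φ b x = 1 + s ^ 2 / b ^ 2 := by
  rw [φ, h]
  ring

lemma one_add_sq_div_sq_add_sqrt_rpow_neg_half {b s : ℝ} (hb : 0 < b) (hs : 0 < s) :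
    (1 + s ^ 2 / b ^ 2 + √(1 + s ^ 2 / b ^ 2)) ^ (-(1 / 2) : ℝ)
      = b / s * √(1 - b / √(b ^ 2 + s ^ 2)) := by
  set r := √(b ^ 2 + s ^ 2)
  have hr : 0 < r := Real.sqrt_pos.2 (by positivity)
  have hr2 : r ^ 2 = b ^ 2 + s ^ 2 := Real.sq_sqrt (by positivity)
  have hsqrt : √(1 + s ^ 2 / b ^ 2) = r / b := by
    rw [Real.sqrt_eq_iff_mul_self_eq_of_pos (by positivity)]
    field_simp
    linarith
  have hinv : (1 + s ^ 2 / b ^ 2 + r / b)⁻¹ = (b / s) ^ 2 * (1 - b / r) := by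
    field_simp
    linear_combination (-b) * hr2
  rw [hsqrt, Real.rpow_neg (by positivity), ← Real.sqrt_eq_rpow, ← Real.sqrt_inv, hinv,
    Real.sqrt_mul (by positivity), Real.sqrt_sq (by positivity)]

noncomputable def fIntegrand (a b x : ℝ) : ℝ :=
  (x ^ 2 + 1) ^ (-a) * (φ b x + √(φ b x)) ^ (-(1 / 2) : ℝ)

lemma integrable_fIntegrand {a : ℝ} (b : ℝ) (ha : 1 / 2 < a) : Integrable (fIntegrand a b) := by
  have hmajorant : Integrable fun x : ℝ => (1 + ‖x‖ ^ 2) ^ (-(2 * a) / 2) :=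
    integrable_rpow_neg_one_add_norm_sq (by rw [Module.finrank_self, Nat.cast_one]; linarith)
  have hbase (x : ℝ) : 1 ≤ φ b x + √(φ b x) := by
    linarith [one_le_φ b x, sqrt_nonneg (φ b x)]
  have hcont : Continuous (fIntegrand a b) := by
    have hφ := continuous_φ b
    exact ((by fun_prop : Continuous fun x : ℝ => x ^ 2 + 1).rpow_const
      fun x => .inl (by positivity)).mul ((hφ.add hφ.sqrt).rpow_const
        fun x => .inl (zero_lt_one.trans_le (hbase x)).ne')
  refine hmajorant.mono' hcont.aestronglyMeasurable (.of_forall fun x => ?_)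
  rw [Real.norm_eq_abs, fIntegrand, abs_of_nonneg (mul_nonneg (by positivity)
    (rpow_nonneg (zero_le_one.trans (hbase x)) _)), norm_eq_abs, sq_abs, add_comm, neg_div,
    mul_div_cancel_left₀ _ two_ne_zero]
  exact mul_le_of_le_one_right (by positivity)
    (rpow_le_one_of_one_le_of_nonpos (hbase x) (by norm_num))

/-- For `σ = -1` and `σ = 1` these are the solutions `x < 1` and `x > 1` of
`2 x / (x ^ 2 + 1) = s`. -/
noncomputable def branch (σ s : ℝ) : ℝ := (1 + σ * √(1 - s ^ 2)) / s

section Branch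

variable {σ s : ℝ}

lemma hasDerivAt_branch (σ : ℝ) (hs : s ∈ Ioo 0 1) :
    HasDerivAt (branch σ) (-(σ + √(1 - s ^ 2)) / (√(1 - s ^ 2) * s ^ 2)) s := by
  have hc : 0 < 1 - s ^ 2 := by nlinarith [hs.1, hs.2]
  have hsqrt := ((hasDerivAt_pow 2 s).const_sub 1).sqrt hc.ne'
  refine (((hsqrt.const_mul σ).const_add 1).div (hasDerivAt_id' s) hs.1.ne').congr_deriv ?_
  have hc2 := Real.sq_sqrt hc.le
  have hc0 := Real.sqrt_pos.2 hc
  have hs0 := hs.1.ne'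
  field_simp
  norm_num
  linear_combination (-2 * σ) * hc2

lemma one_add_mul_sqrt_mul_one_sub_mul_sqrt (hσ : σ ^ 2 = 1) (hs : s ^ 2 ≤ 1) :
    (1 + σ * √(1 - s ^ 2)) * (1 - σ * √(1 - s ^ 2)) = s ^ 2 := by
  linear_combination (-√(1 - s ^ 2) ^ 2) * hσ - Real.sq_sqrt (sub_nonneg.2 hs)

lemma branch_sq_add_one (hσ : σ ^ 2 = 1) (hs : s ∈ Ioo 0 1) :
    branch σ s ^ 2 + 1 = 2 / (1 - σ * √(1 - s ^ 2)) := by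
  have hprod := one_add_mul_sqrt_mul_one_sub_mul_sqrt hσ (by nlinarith [hs.1, hs.2] : s ^ 2 ≤ 1)
  have hne : 1 - σ * √(1 - s ^ 2) ≠ 0 := right_ne_zero_of_mul (hprod ▸ pow_ne_zero 2 hs.1.ne')
  have hs0 := hs.1.ne'
  rw [branch]
  field_simp
  linear_combination (1 + σ * √(1 - s ^ 2)) * hprod

lemma branch_div_sq_add_one (hσ : σ ^ 2 = 1) (hs : s ∈ Ioo 0 1) :
    branch σ s / (branch σ s ^ 2 + 1) = s / 2 := by
  have hprod := one_add_mul_sqrt_mul_one_sub_mul_sqrt hσ (by nlinarith [hs.1, hs.2] : s ^ 2 ≤ 1)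
  rw [branch_sq_add_one hσ hs, branch, div_div_eq_mul_div, div_mul_eq_mul_div, hprod]
  field_simp [hs.1.ne']

lemma injOn_branch (hσ : σ ^ 2 = 1) : InjOn (branch σ) (Ioo 0 1) := by
  intro s hs t ht hst
  have := branch_div_sq_add_one hσ hs
  rw [hst, branch_div_sq_add_one hσ ht] at this
  linarith

lemma branch_two_mul_div_sq_add_one {x : ℝ} (hx : 0 < x) (hσ : σ * |1 - x ^ 2| = x ^ 2 - 1) :
    branch σ (2 * x / (x ^ 2 + 1)) = x := by
  have hsqrt : √(1 - (2 * x / (x ^ 2 + 1)) ^ 2) = |1 - x ^ 2| / (x ^ 2 + 1) := by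
    rw [show 1 - (2 * x / (x ^ 2 + 1)) ^ 2 = ((1 - x ^ 2) / (x ^ 2 + 1)) ^ 2 by field_simp; ring,
      Real.sqrt_sq_eq_abs, abs_div, abs_of_pos (by positivity : 0 < x ^ 2 + 1)]
  rw [branch, hsqrt, mul_div_assoc', hσ]
  field_simp
  ring

lemma two_mul_div_sq_add_one_mem_Ioo {x : ℝ} (hx : 0 < x) (hx1 : x ≠ 1) :
    2 * x / (x ^ 2 + 1) ∈ Ioo 0 1 :=
  ⟨by positivity, (div_lt_one (by positivity)).2
    (by nlinarith [sq_pos_of_ne_zero (sub_ne_zero.2 hx1)])⟩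

lemma branch_neg_one_image : branch (-1) '' Ioo 0 1 = Ioo 0 1 := by
  refine SurjOn.image_eq_of_mapsTo (fun x hx => ⟨_, two_mul_div_sq_add_one_mem_Ioo hx.1 hx.2.ne,
    branch_two_mul_div_sq_add_one hx.1 ?_⟩) (fun s hs => ?_)
  · rw [abs_of_pos (by nlinarith [hx.1, hx.2])]
    ring
  · have hc2 := Real.sq_sqrt (by nlinarith [hs.1, hs.2] : 0 ≤ 1 - s ^ 2)
    have hc := sqrt_nonneg (1 - s ^ 2)
    rw [branch, neg_one_mul, ← sub_eq_add_neg]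
    exact ⟨div_pos (by nlinarith [hs.1, hs.2]) hs.1,
      (div_lt_one hs.1).2 (by nlinarith [hs.1, hs.2])⟩

lemma branch_one_image : branch 1 '' Ioo 0 1 = Ioi 1 := by
  refine SurjOn.image_eq_of_mapsTo (fun x hx => ⟨_, two_mul_div_sq_add_one_mem_Ioo
    (zero_lt_one.trans hx) hx.ne', branch_two_mul_div_sq_add_one (zero_lt_one.trans hx) ?_⟩)
    (fun s hs => ?_)
  · rw [abs_of_neg (by nlinarith [mem_Ioi.1 hx])]
    ring
  · rw [mem_Ioi, branch, one_mul, one_lt_div hs.1]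
    linarith [hs.2, sqrt_nonneg (1 - s ^ 2)]

end Branch

noncomputable def branchIntegrand (a b σ s : ℝ) : ℝ :=
  2 ^ (-a) * b * ((1 - σ * √(1 - s ^ 2)) ^ (a - 1) * √(1 - b / √(b ^ 2 + s ^ 2))
    / (s * √(1 - s ^ 2)))

section Substitution

variable {a b σ : ℝ}

lemma abs_deriv_branch_mul_fIntegrand {s : ℝ} (hb : 0 < b) (hσ : σ ^ 2 = 1) (hs : s ∈ Ioo 0 1) :
    |-(σ + √(1 - s ^ 2)) / (√(1 - s ^ 2) * s ^ 2)| * fIntegrand a b (branch σ s)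
      = branchIntegrand a b σ s := by
  rw [branchIntegrand]
  have hprod := one_add_mul_sqrt_mul_one_sub_mul_sqrt hσ (by nlinarith [hs.1, hs.2] : s ^ 2 ≤ 1)
  set c := √(1 - s ^ 2)
  have hc2 : c ^ 2 = 1 - s ^ 2 := Real.sq_sqrt (by nlinarith [hs.1, hs.2])
  have hc : 0 < c := Real.sqrt_pos.2 (by nlinarith [hs.1, hs.2])
  have hσabs : |σ| = 1 := by simpa [Real.sqrt_sq_eq_abs] using congrArg Real.sqrt hσ
  have hσc : |σ * c| < 1 := by
    rw [abs_mul, hσabs, one_mul, abs_of_pos hc]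
    nlinarith [hs.1]
  have hplus : 0 < 1 + σ * c := by linarith [(abs_lt.1 hσc).1]
  have hminus : 0 < 1 - σ * c := by linarith [(abs_lt.1 hσc).2]
  have habs : |σ + c| = 1 + σ * c := by
    rw [show σ + c = σ * (1 + σ * c) by linear_combination (-c) * hσ, abs_mul, hσabs, one_mul,
      abs_of_pos hplus]
  have hrpow : (2 / (1 - σ * c)) ^ (-a) = 2 ^ (-a) * (1 - σ * c) ^ (a - 1) * (1 - σ * c) := by
    rw [Real.rpow_sub_one hminus.ne', Real.div_rpow zero_le_two hminus.le,
      Real.rpow_neg zero_le_two, Real.rpow_neg hminus.le]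
    field_simp
  rw [fIntegrand, branch_sq_add_one hσ hs, φ_eq_of_div_sq_add_one_eq (branch_div_sq_add_one hσ hs),
    one_add_sq_div_sq_add_sqrt_rpow_neg_half hb hs.1, hrpow, abs_div, abs_neg, habs,
    abs_of_pos (mul_pos hc (pow_pos hs.1 2))]
  have hs0 := hs.1.ne'
  field_simp
  rw [hprod]

lemma integrableOn_branchIntegrand (hb : 0 < b) (hσ : σ ^ 2 = 1)
    (hint : IntegrableOn (fIntegrand a b) (branch σ '' Ioo 0 1)) :
    IntegrableOn (branchIntegrand a b σ) (Ioo 0 1) :=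
  ((integrableOn_image_iff_integrableOn_abs_deriv_smul measurableSet_Ioo
    (fun _ hs => (hasDerivAt_branch σ hs).hasDerivWithinAt) (injOn_branch hσ) _).1 hint).congr_fun
    (fun _ hs => abs_deriv_branch_mul_fIntegrand hb hσ hs) measurableSet_Ioo

lemma setIntegral_image_branch (hb : 0 < b) (hσ : σ ^ 2 = 1) :
    ∫ x in branch σ '' Ioo 0 1, fIntegrand a b x = ∫ s in Ioo 0 1, branchIntegrand a b σ s := by
  rw [integral_image_eq_integral_abs_deriv_smul measurableSet_Ioo
    (fun _ hs => (hasDerivAt_branch σ hs).hasDerivWithinAt) (injOn_branch hσ)]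
  exact setIntegral_congr_fun measurableSet_Ioo fun _ hs => abs_deriv_branch_mul_fIntegrand hb hσ hs

end Substitution

theorem stmt_0 (a b : ℝ) (ha : 1 / 2 < a) (hb : 0 < b) :
    f a b = (2 : ℝ) ^ (-a) * b *
      ∫ s in Set.Ioo (0 : ℝ) 1,
        ((1 + Real.sqrt (1 - s ^ 2)) ^ (a - 1) + (1 - Real.sqrt (1 - s ^ 2)) ^ (a - 1)) *
          Real.sqrt (1 - b / Real.sqrt (b ^ 2 + s ^ 2)) / (s * Real.sqrt (1 - s ^ 2)) := by
  have hint := integrable_fIntegrand b ha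
  have hsplit : f a b = (∫ x in Ioo 0 1, fIntegrand a b x) + ∫ x in Ioi 1, fIntegrand a b x := by
    change ∫ x in Ioi 0, fIntegrand a b x = _
    rw [← Ioc_union_Ioi_eq_Ioi zero_le_one, setIntegral_union (Ioc_disjoint_Ioi le_rfl)
      measurableSet_Ioi hint.integrableOn hint.integrableOn, integral_Ioc_eq_integral_Ioo]
  have hlower : ∫ x in Ioo 0 1, fIntegrand a b x = ∫ s in Ioo 0 1, branchIntegrand a b (-1) s := by
    rw [← setIntegral_image_branch hb (by norm_num), branch_neg_one_image]
  have hupper : ∫ x in Ioi 1, fIntegrand a b x = ∫ s in Ioo 0 1, branchIntegrand a b 1 s := by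
    rw [← setIntegral_image_branch hb (by norm_num), branch_one_image]
  rw [hsplit, hlower, hupper, ← integral_add
    (integrableOn_branchIntegrand hb (by norm_num) (branch_neg_one_image ▸ hint.integrableOn))
    (integrableOn_branchIntegrand hb (by norm_num) (branch_one_image ▸ hint.integrableOn)),
    ← integral_const_mul]
  refine setIntegral_congr_fun measurableSet_Ioo fun _ _ => ?_
  simp only [branchIntegrand, neg_one_mul, sub_neg_eq_add, one_mul]
  ring
end

section
/- For all real b > 0, setting k = b/√(b²+1), one has f(1,b) = k · ∫_k^1 dt / ( (t+1) · √( (1−t)·(t²−k²) ) ), where f(a,b) = ∫_0^∞ (x²+1)^(−a) · (φ(x) + √(φ(x)))^(−1/2) dx with φ(x) = 1 + (4/b²)·(x/(x²+1))². -/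
open Real MeasureTheory

/-- auxiliary: Q b x = b²(x²+1)² + 4x² -/
noncomputable def Qb (b x : ℝ) : ℝ := b ^ 2 * (x ^ 2 + 1) ^ 2 + 4 * x ^ 2

/-- the substitution map t = b(x²+1)/√(Q b x) -/
noncomputable def Tb (b x : ℝ) : ℝ := b * (x ^ 2 + 1) / Real.sqrt (Qb b x)

/-- its derivative -/
noncomputable def Tb' (b x : ℝ) : ℝ :=
  4 * b * x * (x ^ 2 - 1) / (Qb b x * Real.sqrt (Qb b x))

lemma Qb_pos {b : ℝ} (hb : 0 < b) (x : ℝ) : 0 < Qb b x := by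
  have h1 : 0 < b ^ 2 := pow_pos hb 2
  have h2 : (0:ℝ) < (x ^ 2 + 1) ^ 2 := by positivity
  unfold Qb; nlinarith [sq_nonneg x]

lemma sqrtQ_pos {b : ℝ} (hb : 0 < b) (x : ℝ) : 0 < Real.sqrt (Qb b x) :=
  Real.sqrt_pos.2 (Qb_pos hb x)

lemma hasDerivAt_Tb {b : ℝ} (hb : 0 < b) (x : ℝ) :
    HasDerivAt (Tb b) (Tb' b x) x := by
  have hQ : 0 < Qb b x := Qb_pos hb x
  have hS : 0 < Real.sqrt (Qb b x) := sqrtQ_pos hb x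
  have hP : HasDerivAt (fun x : ℝ => b * (x ^ 2 + 1)) (b * (2 * x)) x := by
    have : HasDerivAt (fun x : ℝ => x ^ 2 + 1) (2 * x) x := by
      simpa using ((hasDerivAt_pow 2 x).add_const 1)
    simpa [mul_comm] using this.const_mul b
  have hQ' : HasDerivAt (Qb b) (b ^ 2 * (2 * (x ^ 2 + 1) * (2 * x)) + 8 * x) x := by
    unfold Qb
    have h1 : HasDerivAt (fun x : ℝ => (x ^ 2 + 1) ^ 2) (2 * (x ^ 2 + 1) * (2 * x)) x := by
      have h0 : HasDerivAt (fun x : ℝ => x ^ 2 + 1) (2 * x) x := by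
        simpa using ((hasDerivAt_pow 2 x).add_const 1)
      have := (hasDerivAt_pow 2 (x ^ 2 + 1)).comp x h0
      simpa [Function.comp_def, mul_comm, mul_assoc, mul_left_comm] using this
    have h2 : HasDerivAt (fun x : ℝ => 4 * x ^ 2) (8 * x) x := by
      have := (hasDerivAt_pow 2 x).const_mul 4
      norm_num at this
      exact this.congr_deriv (by ring)
    simpa [Pi.add_def, mul_comm, mul_assoc, mul_left_comm] using ((h1.const_mul (b ^ 2)).add h2)
  have hsq : HasDerivAt (fun x => Real.sqrt (Qb b x))
      ((b ^ 2 * (2 * (x ^ 2 + 1) * (2 * x)) + 8 * x) / (2 * Real.sqrt (Qb b x))) x :=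
    hQ'.sqrt hQ.ne'
  have := hP.div hsq hS.ne'
  refine this.congr_deriv ?_
  symm
  have hs2 : Real.sqrt (Qb b x) ^ 2 = Qb b x := Real.sq_sqrt hQ.le
  unfold Tb'
  simp only [Qb] at hs2 ⊢
  field_simp
  linear_combination (-((b ^ 2 * (x ^ 2 + 1) ^ 2 + 4 * x ^ 2) *
    Real.sqrt (b ^ 2 * (x ^ 2 + 1) ^ 2 + 4 * x ^ 2) * (4 * b * x)) + ((-8 * x ^ 1) + (-4 * x ^ 1 * b ^ 2) + (4 * x ^ 1 * b ^ 3 * Real.sqrt (b ^ 2 * (x ^ 2 + 1) ^ 2 + 4 * x ^ 2) ^ 1) + (-8 * x ^ 3) + (16 * x ^ 3 * b ^ 1 * Real.sqrt (b ^ 2 * (x ^ 2 + 1) ^ 2 + 4 * x ^ 2) ^ 1) + (-8 * x ^ 3 * b ^ 2) + (8 * x ^ 3 * b ^ 3 * Real.sqrt (b ^ 2 * (x ^ 2 + 1) ^ 2 + 4 * x ^ 2) ^ 1) + (-4 * x ^ 5 * b ^ 2) + (4 * x ^ 5 * b ^ 3 * Real.sqrt (b ^ 2 * (x ^ 2 +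 1) ^ 2 + 4 * x ^ 2) ^ 1))) * hs2


lemma continuous_Tb {b : ℝ} (hb : 0 < b) : Continuous (Tb b) := by
  unfold Tb
  exact Continuous.div (by continuity)
    (Real.continuous_sqrt.comp (by unfold Qb; continuity))
    (fun x => (sqrtQ_pos hb x).ne')

lemma phi_eq {b : ℝ} (hb : 0 < b) (x : ℝ) :
    φ b x = Qb b x / (b ^ 2 * (x ^ 2 + 1) ^ 2) := by
  unfold φ Qb
  have h1 : (x:ℝ) ^ 2 + 1 ≠ 0 := by positivity
  field_simp

lemma sqrt_phi_eq {b : ℝ} (hb : 0 < b) (x : ℝ) :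
    Real.sqrt (φ b x) = Real.sqrt (Qb b x) / (b * (x ^ 2 + 1)) := by
  have hP : (0:ℝ) < x ^ 2 + 1 := by positivity
  rw [phi_eq hb, show b ^ 2 * (x ^ 2 + 1) ^ 2 = (b * (x ^ 2 + 1)) ^ 2 by ring,
    Real.sqrt_div (Qb_pos hb x).le, Real.sqrt_sq (by positivity)]

lemma key1 {b : ℝ} (hb : 0 < b) (x : ℝ) :
    (x ^ 2 + 1) ^ (-(1:ℝ)) * (φ b x + Real.sqrt (φ b x)) ^ (-(1 / 2) : ℝ)
      = b / (Real.sqrt (Real.sqrt (Qb b x)) *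
          Real.sqrt (Real.sqrt (Qb b x) + b * (x ^ 2 + 1))) := by
  have hP : (0:ℝ) < x ^ 2 + 1 := by positivity
  have hS : 0 < Real.sqrt (Qb b x) := sqrtQ_pos hb x
  set S := Real.sqrt (Qb b x) with hSdef
  have hs2 : S ^ 2 = Qb b x := Real.sq_sqrt (Qb_pos hb x).le
  have hsum : φ b x + Real.sqrt (φ b x)
      = S * (S + b * (x ^ 2 + 1)) / (b * (x ^ 2 + 1)) ^ 2 := by
    rw [sqrt_phi_eq hb, phi_eq hb, ← hSdef]
    rw [show b ^ 2 * (x ^ 2 + 1) ^ 2 = (b * (x ^ 2 + 1)) ^ 2 by ring]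
    field_simp
    linear_combination (-1) * hs2
  rw [hsum, Real.rpow_neg hP.le, Real.rpow_one,
    Real.rpow_neg (by positivity), ← Real.sqrt_eq_rpow,
    Real.sqrt_div (by positivity), Real.sqrt_mul hS.le,
    Real.sqrt_sq (by positivity)]
  have h1 : 0 < Real.sqrt S := Real.sqrt_pos.2 hS
  have h2 : 0 < Real.sqrt (S + b * (x ^ 2 + 1)) := Real.sqrt_pos.2 (by positivity)
  field_simp


lemma key2 {b k : ℝ} (hb : 0 < b) (hk : k = b / Real.sqrt (b ^ 2 + 1)) {x : ℝ}
    (hx : 0 < x) (hx1 : x ≠ 1) :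
    (x ^ 2 + 1) ^ (-(1:ℝ)) * (φ b x + Real.sqrt (φ b x)) ^ (-(1 / 2) : ℝ)
      = k / 2 * (|Tb' b x| * (1 / ((Tb b x + 1) *
          Real.sqrt ((1 - Tb b x) * (Tb b x ^ 2 - k ^ 2))))) := by
  have hP : (0:ℝ) < x ^ 2 + 1 := by positivity
  have hQ : 0 < Qb b x := Qb_pos hb x
  have hS : 0 < Real.sqrt (Qb b x) := sqrtQ_pos hb x
  set S := Real.sqrt (Qb b x) with hSdef
  have hs2 : S ^ 2 = Qb b x := Real.sq_sqrt hQ.le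
  have hc : 0 < Real.sqrt (b ^ 2 + 1) := Real.sqrt_pos.2 (by positivity)
  have hc2 : Real.sqrt (b ^ 2 + 1) ^ 2 = b ^ 2 + 1 := Real.sq_sqrt (by positivity)
  have hm : x ^ 2 - 1 ≠ 0 := fun h => hx1 (by nlinarith)
  have hbPS : b * (x ^ 2 + 1) < S := by
    rw [hSdef, Real.lt_sqrt (by positivity)]
    unfold Qb; nlinarith
  have hbP : 0 < b * (x ^ 2 + 1) := by positivity
  have hk2 : k ^ 2 = b ^ 2 / (b ^ 2 + 1) := by rw [hk, div_pow, hc2]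
  have hT1 : Tb b x + 1 = (S + b * (x ^ 2 + 1)) / S := by
    unfold Tb; rw [← hSdef]; field_simp; ring
  have h1T : 1 - Tb b x = (S - b * (x ^ 2 + 1)) / S := by
    unfold Tb; rw [← hSdef]; field_simp
  have hTsq : Tb b x ^ 2 = b ^ 2 * (x ^ 2 + 1) ^ 2 / Qb b x := by
    unfold Tb; rw [← hSdef, div_pow, hs2]; ring
  have hTk : Tb b x ^ 2 - k ^ 2 = b ^ 2 * (x ^ 2 - 1) ^ 2 / (Qb b x * (b ^ 2 + 1)) := by
    rw [hTsq, hk2, div_sub_div _ _ hQ.ne' (by positivity : ((b:ℝ) ^ 2 + 1) ≠ 0)]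
    congr 1
    unfold Qb; ring
  have h4 : S - b * (x ^ 2 + 1) = (2 * x) ^ 2 / (S + b * (x ^ 2 + 1)) := by
    rw [eq_div_iff (by positivity)]
    unfold Qb at hs2
    linear_combination hs2
  have hprod : (1 - Tb b x) * (Tb b x ^ 2 - k ^ 2)
      = (b * (x ^ 2 - 1)) ^ 2 * ((2 * x) ^ 2 / (S + b * (x ^ 2 + 1)))
          / (S * (Qb b x * (b ^ 2 + 1))) := by
    rw [h1T, hTk]
    have hs2' := hs2
    unfold Qb at hs2' ⊢
    field_simp
    linear_combination (S * (b ^ 2 * (x ^ 2 + 1) ^ 2 + 4 * x ^ 2) * (x ^ 2 - 1) ^ 2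
      * b ^ 2 * (1 + b ^ 2) + ((1) + (-1 * b ^ 4 * S ^ 1) + (-1 * b ^ 6 * S ^ 1) + (-4 * x ^ 2 * b ^ 2 * S ^ 1) + (-4 * x ^ 2 * b ^ 4 * S ^ 1) + (8 * x ^ 4 * b ^ 2 * S ^ 1) + (10 * x ^ 4 * b ^ 4 * S ^ 1) + (2 * x ^ 4 * b ^ 6 * S ^ 1) + (-4 * x ^ 6 * b ^ 2 * S ^ 1) + (-4 * x ^ 6 * b ^ 4 * S ^ 1) + (-1 * x ^ 8 * b ^ 4 * S ^ 1) + (-1 * x ^ 8 * b ^ 6 * S ^ 1))) * hs2'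
  have hrs : 0 < Real.sqrt (S + b * (x ^ 2 + 1)) := Real.sqrt_pos.2 (by positivity)
  have hsq : Real.sqrt ((1 - Tb b x) * (Tb b x ^ 2 - k ^ 2))
      = (b * |x ^ 2 - 1|) * (2 * x / Real.sqrt (S + b * (x ^ 2 + 1)))
          / (Real.sqrt S * (S * Real.sqrt (b ^ 2 + 1))) := by
    rw [hprod, Real.sqrt_div (by positivity), Real.sqrt_mul (sq_nonneg _),
      Real.sqrt_sq_eq_abs, Real.sqrt_div (sq_nonneg _),
      Real.sqrt_sq (by linarith : (0:ℝ) ≤ 2 * x),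
      Real.sqrt_mul hS.le, Real.sqrt_mul hQ.le, ← hSdef,
      abs_mul, abs_of_pos hb]
  have habs : |Tb' b x| = 4 * b * x * |x ^ 2 - 1| / (Qb b x * S) := by
    unfold Tb'; rw [← hSdef, abs_div, abs_of_pos (by positivity : (0:ℝ) < Qb b x * S),
      show 4 * b * x * (x ^ 2 - 1) = (4 * b * x) * (x ^ 2 - 1) by ring,
      abs_mul, abs_of_pos (by positivity : (0:ℝ) < 4 * b * x)]
  rw [key1 hb, ← hSdef, hsq, hT1, habs, hk]
  have ha2 : Real.sqrt S ^ 2 = S := Real.sq_sqrt hS.le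
  have hr2 : Real.sqrt (S + b * (x ^ 2 + 1)) ^ 2 = S + b * (x ^ 2 + 1) :=
    Real.sq_sqrt (by positivity)
  have hma : 0 < |x ^ 2 - 1| := abs_pos.2 hm
  have h1 : 0 < Real.sqrt S := Real.sqrt_pos.2 hS
  field_simp
  linear_combination
    (-(4 * b ^ 2 * Real.sqrt (b ^ 2 + 1) * x * |x ^ 2 - 1| * S ^ 2 * Real.sqrt S ^ 2) - (4 - 4 * b ^ 2 * x * Real.sqrt (b ^ 2 + 1) * |x ^ 2 - 1| * S) * S ^ 2) * hr2
    + (-(4 * b ^ 2 * Real.sqrt (b ^ 2 + 1) * x * |x ^ 2 - 1| * S ^ 2 * (S + b * (x ^ 2 + 1))) - (4 - 4 * b ^ 2 * x * Real.sqrt (b ^ 2 + 1) * |x ^ 2 - 1| * S) * S * Real.sqrt (S + b * (x ^ 2 + 1)) ^ 2) * ha2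
    + (-(4 * b ^ 2 * Real.sqrt (b ^ 2 + 1) * x * |x ^ 2 - 1| * S * (S + b * (x ^ 2 + 1))) - (4 - 4 * b ^ 2 * x * Real.sqrt (b ^ 2 + 1) * |x ^ 2 - 1| * S) * (S + b * (x ^ 2 + 1))) * hs2


lemma Tb_lt_one {b : ℝ} (hb : 0 < b) {x : ℝ} (hx : 0 < x) : Tb b x < 1 := by
  unfold Tb
  rw [div_lt_one (sqrtQ_pos hb x), Real.lt_sqrt (by positivity)]
  unfold Qb; nlinarith

lemma k_lt_Tb {b : ℝ} (hb : 0 < b) {x : ℝ} (hx : 0 < x) (hx1 : x ≠ 1) :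
    b / Real.sqrt (b ^ 2 + 1) < Tb b x := by
  have hc : 0 < Real.sqrt (b ^ 2 + 1) := Real.sqrt_pos.2 (by positivity)
  have hc2 : Real.sqrt (b ^ 2 + 1) ^ 2 = b ^ 2 + 1 := Real.sq_sqrt (by positivity)
  have hS : 0 < Real.sqrt (Qb b x) := sqrtQ_pos hb x
  have hm : x ^ 2 - 1 ≠ 0 := fun h => hx1 (by nlinarith)
  have hm2 : 0 < (x ^ 2 - 1) ^ 2 :=
    lt_of_le_of_ne (sq_nonneg _) (Ne.symm (pow_ne_zero 2 hm))
  unfold Tb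
  rw [div_lt_div_iff₀ hc hS]
  have h1 : Real.sqrt (Qb b x) < (x ^ 2 + 1) * Real.sqrt (b ^ 2 + 1) := by
    rw [Real.sqrt_lt' (by positivity)]
    unfold Qb
    nlinarith [hm2, hc2]
  nlinarith [h1, hS, hc]

lemma Tb_zero {b : ℝ} (hb : 0 < b) : Tb b 0 = 1 := by
  unfold Tb Qb
  norm_num
  rw [Real.sqrt_sq hb.le]
  field_simp

lemma Tb_one {b : ℝ} (hb : 0 < b) : Tb b 1 = b / Real.sqrt (b ^ 2 + 1) := by
  have hc : 0 < Real.sqrt (b ^ 2 + 1) := Real.sqrt_pos.2 (by positivity)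
  have h : Real.sqrt (Qb b 1) = 2 * Real.sqrt (b ^ 2 + 1) := by
    rw [show Qb b 1 = (2:ℝ) ^ 2 * (b ^ 2 + 1) by unfold Qb; ring,
      Real.sqrt_mul (by positivity), Real.sqrt_sq (by norm_num)]
  unfold Tb
  rw [h, show b * ((1:ℝ) ^ 2 + 1) = 2 * b by ring,
    mul_div_mul_left b (Real.sqrt (b ^ 2 + 1)) (by norm_num : (2:ℝ) ≠ 0)]

lemma Tb_strictAntiOn {b : ℝ} (hb : 0 < b) : StrictAntiOn (Tb b) (Set.Icc 0 1) := by
  apply strictAntiOn_of_deriv_neg (convex_Icc 0 1) (continuous_Tb hb).continuousOn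
  intro x hx
  rw [interior_Icc] at hx
  rw [(hasDerivAt_Tb hb x).deriv]
  unfold Tb'
  apply div_neg_of_neg_of_pos
  · have h1 : 0 < x := hx.1
    have h2 : x < 1 := hx.2
    have hbx : 0 < b * x := mul_pos hb h1
    have h3 : 0 < 1 - x ^ 2 := by nlinarith
    nlinarith [mul_pos hbx h3]
  · exact mul_pos (Qb_pos hb x) (sqrtQ_pos hb x)

lemma Tb_strictMonoOn {b : ℝ} (hb : 0 < b) : StrictMonoOn (Tb b) (Set.Ici 1) := by
  apply strictMonoOn_of_deriv_pos (convex_Ici 1) (continuous_Tb hb).continuousOn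
  intro x hx
  rw [interior_Ici] at hx
  rw [(hasDerivAt_Tb hb x).deriv]
  unfold Tb'
  apply div_pos
  · have h1 : (1:ℝ) < x := hx
    have hbx : 0 < b * x := mul_pos hb (lt_trans one_pos h1)
    have h3 : 0 < x ^ 2 - 1 := by nlinarith
    nlinarith [mul_pos hbx h3]
  · exact mul_pos (Qb_pos hb x) (sqrtQ_pos hb x)

lemma Tb_image1 {b : ℝ} (hb : 0 < b) :
    Tb b '' Set.Ioo 0 1 = Set.Ioo (b / Real.sqrt (b ^ 2 + 1)) 1 := by
  apply Set.Subset.antisymm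
  · rintro y ⟨x, hx, rfl⟩
    exact ⟨k_lt_Tb hb hx.1 (ne_of_lt hx.2), Tb_lt_one hb hx.1⟩
  · intro y hy
    have h := intermediate_value_Ioo' (by norm_num : (0:ℝ) ≤ 1)
      (continuous_Tb hb).continuousOn
    rw [Tb_zero hb, Tb_one hb] at h
    exact h hy

lemma Tb_image2 {b : ℝ} (hb : 0 < b) :
    Tb b '' Set.Ioi 1 = Set.Ioo (b / Real.sqrt (b ^ 2 + 1)) 1 := by
  have hc : 0 < Real.sqrt (b ^ 2 + 1) := Real.sqrt_pos.2 (by positivity)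
  apply Set.Subset.antisymm
  · rintro y ⟨x, hx, rfl⟩
    have hx1 : (1:ℝ) < x := hx
    exact ⟨k_lt_Tb hb (lt_trans one_pos hx1) (ne_of_gt hx1),
      Tb_lt_one hb (lt_trans one_pos hx1)⟩
  · intro y hy
    have hy1 : y < 1 := hy.2
    have hy0 : 0 < y := lt_trans (by positivity) hy.1
    have hb2 : 0 < b ^ 2 := pow_pos hb 2
    have hd : 0 < b ^ 2 * (1 - y ^ 2) :=
      mul_pos hb2 (by nlinarith : (0:ℝ) < 1 - y ^ 2)
    set M : ℝ := 1 + 4 / (b ^ 2 * (1 - y ^ 2)) with hMdef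
    have hd4 : 0 < 4 / (b ^ 2 * (1 - y ^ 2)) := by positivity
    have hM1 : (1:ℝ) < M := by rw [hMdef]; linarith
    have h4M : 4 < M * (b ^ 2 * (1 - y ^ 2)) := by
      rw [← div_lt_iff₀ hd]
      rw [hMdef]; linarith
    have hSM : 0 < Real.sqrt (Qb b M) := sqrtQ_pos hb M
    have hTM : y < Tb b M := by
      unfold Tb
      rw [lt_div_iff₀ hSM]
      have h2 : Real.sqrt (Qb b M) < b * (M ^ 2 + 1) / y := by
        rw [Real.sqrt_lt' (by positivity)]
        rw [div_pow, lt_div_iff₀ (by positivity)]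
        unfold Qb
        have hM0 : 0 < M := lt_trans one_pos hM1
        have e1 : 4 * M ^ 3 < M ^ 4 * (b ^ 2 * (1 - y ^ 2)) := by
          nlinarith [mul_lt_mul_of_pos_left h4M (pow_pos hM0 3)]
        have e2 : 4 * M ^ 2 ≤ 4 * M ^ 3 := by nlinarith [hM1, hM0]
        have e3 : y ^ 2 < 1 := by nlinarith
        have e4 : M ^ 4 * (b ^ 2 * (1 - y ^ 2)) ≤ (M ^ 2 + 1) ^ 2 * (b ^ 2 * (1 - y ^ 2)) := by
          nlinarith [hd, sq_nonneg M]
        have e5 : 4 * M ^ 2 * y ^ 2 < 4 * M ^ 2 := by nlinarith [e3, pow_pos hM0 2]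
        nlinarith [e1, e2, e4, e5]
      calc y * Real.sqrt (Qb b M) < y * (b * (M ^ 2 + 1) / y) := by
            exact mul_lt_mul_of_pos_left h2 hy0
        _ = b * (M ^ 2 + 1) := by field_simp
    have h := intermediate_value_Ioo hM1.le (continuous_Tb hb).continuousOn
    rw [Tb_one hb] at h
    obtain ⟨x, hx, hxy⟩ := h ⟨hy.1, hTM⟩
    exact ⟨x, hx.1, hxy⟩

lemma integrand_integrable {b : ℝ} (hb : 0 < b) :
    Integrable (fun x : ℝ =>
      (x ^ 2 + 1) ^ (-(1:ℝ)) * (φ b x + Real.sqrt (φ b x)) ^ (-(1 / 2) : ℝ)) := by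
  have hφ1 : ∀ x, 1 ≤ φ b x := by
    intro x; unfold φ
    have : 0 ≤ (4 / b ^ 2) * (x / (x ^ 2 + 1)) ^ 2 := by positivity
    linarith
  have hφnn : ∀ x, 0 ≤ φ b x := fun x => le_trans zero_le_one (hφ1 x)
  have hbase : ∀ x, (1:ℝ) ≤ φ b x + Real.sqrt (φ b x) :=
    fun x => le_add_of_le_of_nonneg (hφ1 x) (Real.sqrt_nonneg _)
  have hφc : Continuous (φ b) := by
    unfold φ
    have h1 : Continuous fun x : ℝ => x / (x ^ 2 + 1) :=
      continuous_id.div (by continuity) (fun x => by positivity)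
    exact continuous_const.add (continuous_const.mul (h1.pow 2))
  have hcont : Continuous (fun x : ℝ =>
      (x ^ 2 + 1) ^ (-(1:ℝ)) * (φ b x + Real.sqrt (φ b x)) ^ (-(1 / 2) : ℝ)) := by
    apply Continuous.mul
    · exact ((continuous_id.pow 2).add continuous_const).rpow_const
        (fun x => Or.inl (by simp only [Pi.add_apply, Pi.pow_apply, id]; positivity))
    · exact (hφc.add (Real.continuous_sqrt.comp hφc)).rpow_const
        (fun x => Or.inl (by
          simp only [Pi.add_apply, Function.comp_apply]
          nlinarith [hbase x]))
  apply Integrable.mono integrable_inv_one_add_sq hcont.aestronglyMeasurable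
  filter_upwards with x
  have hnn1 : (0:ℝ) ≤ (x ^ 2 + 1) ^ (-(1:ℝ)) := Real.rpow_nonneg (by positivity) _
  have hnn2 : (0:ℝ) ≤ (φ b x + Real.sqrt (φ b x)) ^ (-(1 / 2) : ℝ) :=
    Real.rpow_nonneg (by nlinarith [hφ1 x, Real.sqrt_nonneg (φ b x)]) _
  rw [Real.norm_eq_abs, Real.norm_eq_abs, abs_of_nonneg (mul_nonneg hnn1 hnn2),
    abs_of_nonneg (by positivity : (0:ℝ) ≤ ((1 + x ^ 2)⁻¹ : ℝ))]
  have h2 : (φ b x + Real.sqrt (φ b x)) ^ (-(1 / 2) : ℝ) ≤ 1 :=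
    Real.rpow_le_one_of_one_le_of_nonpos (hbase x) (by norm_num)
  calc (x ^ 2 + 1) ^ (-(1:ℝ)) * (φ b x + Real.sqrt (φ b x)) ^ (-(1 / 2) : ℝ)
      ≤ (x ^ 2 + 1) ^ (-(1:ℝ)) * 1 := mul_le_mul_of_nonneg_left h2 hnn1
    _ = (1 + x ^ 2)⁻¹ := by rw [mul_one, Real.rpow_neg_one, add_comm]

theorem stmt_2 (b : ℝ) (hb : 0 < b) (k : ℝ) (hk : k = b / Real.sqrt (b ^ 2 + 1)) :
    f 1 b = k * ∫ t in Set.Ioo k 1,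
      1 / ((t + 1) * Real.sqrt ((1 - t) * (t ^ 2 - k ^ 2))) := by
  have hInt : Integrable (fun x : ℝ =>
      (x ^ 2 + 1) ^ (-(1:ℝ)) * (φ b x + Real.sqrt (φ b x)) ^ (-(1 / 2) : ℝ)) :=
    integrand_integrable hb
  have hsets : (Set.Ioi (0:ℝ) : Set ℝ) =ᵐ[volume] ((Set.Ioo (0:ℝ) 1 ∪ Set.Ioi 1 : Set ℝ)) := by
    have h1 : Set.Ioo (0:ℝ) 1 ∪ Set.Ioi 1 = Set.Ioi 0 \ {1} := by
      ext z
      simp only [Set.mem_union, Set.mem_Ioo, Set.mem_Ioi, Set.mem_diff,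
        Set.mem_singleton_iff]
      constructor
      · rintro (⟨h1, h2⟩ | h)
        · exact ⟨h1, ne_of_lt h2⟩
        · exact ⟨lt_trans one_pos h, ne_of_gt h⟩
      · rintro ⟨h1, h2⟩
        rcases lt_or_gt_of_ne h2 with h | h
        · exact Or.inl ⟨h1, h⟩
        · exact Or.inr h
    rw [h1]
    exact (MeasureTheory.diff_ae_eq_self.2
      (measure_mono_null Set.inter_subset_right (measure_singleton 1))).symm
  have hdisj : Disjoint (Set.Ioo (0:ℝ) 1) (Set.Ioi 1) := by
    rw [Set.disjoint_left]
    rintro z ⟨_, h2⟩ h3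
    exact absurd h3 (not_lt.2 h2.le)
  have hpiece1 : (∫ x in Set.Ioo (0:ℝ) 1,
      (x ^ 2 + 1) ^ (-(1:ℝ)) * (φ b x + Real.sqrt (φ b x)) ^ (-(1 / 2) : ℝ))
      = k / 2 * ∫ t in Set.Ioo k 1,
          1 / ((t + 1) * Real.sqrt ((1 - t) * (t ^ 2 - k ^ 2))) := by
    rw [setIntegral_congr_fun measurableSet_Ioo
      (fun x hx => key2 hb hk hx.1 (ne_of_lt hx.2)), MeasureTheory.integral_const_mul]
    congr 1
    have h := integral_image_eq_integral_abs_deriv_smul measurableSet_Ioo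
      (fun x _ => (hasDerivAt_Tb hb x).hasDerivWithinAt)
      (Set.InjOn.mono Set.Ioo_subset_Icc_self (Tb_strictAntiOn hb).injOn)
      (fun t => 1 / ((t + 1) * Real.sqrt ((1 - t) * (t ^ 2 - k ^ 2))))
    rw [Tb_image1 hb, ← hk] at h
    simpa [smul_eq_mul] using h.symm
  have hpiece2 : (∫ x in Set.Ioi (1:ℝ),
      (x ^ 2 + 1) ^ (-(1:ℝ)) * (φ b x + Real.sqrt (φ b x)) ^ (-(1 / 2) : ℝ))
      = k / 2 * ∫ t in Set.Ioo k 1,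
          1 / ((t + 1) * Real.sqrt ((1 - t) * (t ^ 2 - k ^ 2))) := by
    rw [setIntegral_congr_fun measurableSet_Ioi
      (fun x hx => key2 hb hk (lt_trans one_pos hx) (ne_of_gt hx)),
      MeasureTheory.integral_const_mul]
    congr 1
    have h := integral_image_eq_integral_abs_deriv_smul measurableSet_Ioi
      (fun x _ => (hasDerivAt_Tb hb x).hasDerivWithinAt)
      (Set.InjOn.mono Set.Ioi_subset_Ici_self (Tb_strictMonoOn hb).injOn)
      (fun t => 1 / ((t + 1) * Real.sqrt ((1 - t) * (t ^ 2 - k ^ 2))))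
    rw [Tb_image2 hb, ← hk] at h
    simpa [smul_eq_mul] using h.symm
  unfold f
  rw [setIntegral_congr_set hsets,
    setIntegral_union hdisj measurableSet_Ioi hInt.integrableOn hInt.integrableOn,
    hpiece1, hpiece2]
  ring
end

section
/- For all real b > 0, f(3/2, b) = (b/4) · ∫_0^(π/2) [ 1/sin(t/2) + 1/cos(t/2) ] · √( 1 − b/√(b² + sin²t) ) dt, where f(a,b) = ∫_0^∞ (x²+1)^(−a) · (φ(x) + √(φ(x)))^(−1/2) dx with φ(x) = 1 + (4/b²)·(x/(x²+1))². -/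
open Real MeasureTheory

/-- Auxiliary kernel: `W b s = (1 + s²/b² + √(1+s²/b²))^{-1/2}`. -/
noncomputable def W (b s : ℝ) : ℝ :=
  (1 + s ^ 2 / b ^ 2 + Real.sqrt (1 + s ^ 2 / b ^ 2)) ^ (-(1 / 2) : ℝ)

lemma W_continuous (b : ℝ) (hb : 0 < b) : Continuous (W b) := by
  have hbase : ∀ s : ℝ, (0:ℝ) < 1 + s ^ 2 / b ^ 2 + Real.sqrt (1 + s ^ 2 / b ^ 2) := by
    intro s
    have h1 : (0:ℝ) < 1 + s ^ 2 / b ^ 2 := by positivity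
    have := Real.sqrt_nonneg (1 + s ^ 2 / b ^ 2)
    linarith
  apply Continuous.rpow_const
  · exact (continuous_const.add ((continuous_pow 2).div_const _)).add
      ((continuous_const.add ((continuous_pow 2).div_const _)).sqrt)
  · intro s; exact Or.inl (hbase s).ne'

/-- `W b s` expressed via `S = √(b²+s²)`. -/
lemma W_eq (b s : ℝ) (hb : 0 < b) :
    W b s = b / Real.sqrt (Real.sqrt (b ^ 2 + s ^ 2) * (Real.sqrt (b ^ 2 + s ^ 2) + b)) := by
  set S := Real.sqrt (b ^ 2 + s ^ 2) with hS
  have hS0 : 0 < S := Real.sqrt_pos.2 (by positivity)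
  have hS2 : S ^ 2 = b ^ 2 + s ^ 2 := Real.sq_sqrt (by positivity)
  have h1 : 1 + s ^ 2 / b ^ 2 = S ^ 2 / b ^ 2 := by
    field_simp [hS2]
    linarith
  have h2 : Real.sqrt (1 + s ^ 2 / b ^ 2) = S / b := by
    rw [h1, Real.sqrt_div (by positivity), Real.sqrt_sq hS0.le, Real.sqrt_sq hb.le]
  have h3 : 1 + s ^ 2 / b ^ 2 + Real.sqrt (1 + s ^ 2 / b ^ 2) = S * (S + b) / b ^ 2 := by
    rw [h2, h1]; field_simp
  rw [W, h3]
  have hpos : (0:ℝ) < S * (S + b) / b ^ 2 := by positivity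
  rw [Real.rpow_neg hpos.le, ← Real.sqrt_eq_rpow,
    Real.sqrt_div (by positivity : (0:ℝ) ≤ S * (S + b)), Real.sqrt_sq hb.le, inv_div]

/-- Pointwise identity for the right-hand side integrand. -/
lemma rhs_integrand (b : ℝ) (hb : 0 < b) {t : ℝ} (ht : t ∈ Set.Ioo (0:ℝ) (Real.pi/2)) :
    (1 / Real.sin (t / 2) + 1 / Real.cos (t / 2)) *
        Real.sqrt (1 - b / Real.sqrt (b ^ 2 + Real.sin t ^ 2)) =
      (2 / b) * ((Real.sin (t / 2) + Real.cos (t / 2)) * W b (Real.sin t)) := by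
  obtain ⟨ht0, ht2⟩ := ht
  have hpi := Real.pi_pos
  have hsh : 0 < Real.sin (t / 2) := Real.sin_pos_of_pos_of_lt_pi (by linarith) (by linarith)
  have hch : 0 < Real.cos (t / 2) := Real.cos_pos_of_mem_Ioo ⟨by linarith, by linarith⟩
  have hs : 0 < Real.sin t := Real.sin_pos_of_pos_of_lt_pi ht0 (by linarith)
  set s := Real.sin t with hsdef
  have hs2 : s = 2 * Real.sin (t / 2) * Real.cos (t / 2) := by
    have h := Real.sin_two_mul (t / 2)
    rw [show 2 * (t / 2) = t by ring] at h
    rw [hsdef, h]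
  set S := Real.sqrt (b ^ 2 + s ^ 2) with hS
  have hS0 : 0 < S := Real.sqrt_pos.2 (by positivity)
  have hSsq : S ^ 2 = b ^ 2 + s ^ 2 := Real.sq_sqrt (by positivity)
  have hbS : b ≤ S := by
    rw [hS]
    calc b = Real.sqrt (b ^ 2) := (Real.sqrt_sq hb.le).symm
    _ ≤ Real.sqrt (b ^ 2 + s ^ 2) := Real.sqrt_le_sqrt (by nlinarith)
  set Q := Real.sqrt (S * (S + b)) with hQ
  have hQ0 : 0 < Q := Real.sqrt_pos.2 (by positivity)
  have hQsq : Q ^ 2 = S * (S + b) := Real.sq_sqrt (by positivity)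
  have hW : W b s = b / Q := W_eq b s hb
  have hsub : 1 - b / S = s ^ 2 / Q ^ 2 := by
    rw [hQsq]
    have hSb : S - b = s ^ 2 / (S + b) := by
      have : (S - b) * (S + b) = s ^ 2 := by nlinarith
      field_simp [← this]
      linarith
    field_simp
    nlinarith
  have hsqrt : Real.sqrt (1 - b / S) = s / Q := by
    rw [hsub, Real.sqrt_div (by positivity), Real.sqrt_sq hs.le, Real.sqrt_sq hQ0.le]
  rw [hsqrt, hW, hs2]
  field_simp
  ring

lemma rpow_aux {c : ℝ} (hc : 0 < c) : ((1:ℝ) / c ^ 2) ^ (-(3/2) : ℝ) = c ^ 3 := by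
  rw [one_div, ← Real.rpow_natCast c 2, ← Real.rpow_neg hc.le, ← Real.rpow_mul hc.le]
  have h : (-((2:ℕ):ℝ)) * -(3/2) = ((3:ℕ):ℝ) := by push_cast; norm_num
  rw [h, Real.rpow_natCast]

/-- Pointwise identity for the left-hand side integrand after substituting `x = tan θ`. -/
lemma lhs_integrand (b : ℝ) (hb : 0 < b) {θ : ℝ} (hθ : θ ∈ Set.Ioo (0:ℝ) (Real.pi/2)) :
    |1 / Real.cos θ ^ 2| •
        ((Real.tan θ ^ 2 + 1) ^ (-(3/2) : ℝ) *
          (φ b (Real.tan θ) + Real.sqrt (φ b (Real.tan θ))) ^ (-(1 / 2) : ℝ)) =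
      Real.cos θ * W b (Real.sin (2 * θ)) := by
  obtain ⟨h0, h2⟩ := hθ
  have hpi := Real.pi_pos
  have hc : 0 < Real.cos θ := Real.cos_pos_of_mem_Ioo ⟨by linarith, h2⟩
  have htan : Real.tan θ = Real.sin θ / Real.cos θ := Real.tan_eq_sin_div_cos θ
  have hpyth := Real.sin_sq_add_cos_sq θ
  have hkey1 : Real.tan θ ^ 2 + 1 = 1 / Real.cos θ ^ 2 := by
    rw [htan, div_pow]
    field_simp
    linarith
  have harg : Real.tan θ / (Real.tan θ ^ 2 + 1) = Real.sin θ * Real.cos θ := by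
    rw [hkey1, htan]
    field_simp
  have hkey2 : φ b (Real.tan θ) = 1 + Real.sin (2 * θ) ^ 2 / b ^ 2 := by
    rw [φ, harg, Real.sin_two_mul]
    field_simp
    ring
  rw [hkey1, rpow_aux hc, hkey2, smul_eq_mul,
    abs_of_pos (by positivity : (0:ℝ) < 1 / Real.cos θ ^ 2), W]
  field_simp

theorem stmt_4 (b : ℝ) (hb : 0 < b) :
    f (3 / 2) b = (b / 4) *
      ∫ t in Set.Ioo (0 : ℝ) (Real.pi / 2),
        (1 / Real.sin (t / 2) + 1 / Real.cos (t / 2)) *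
          Real.sqrt (1 - b / Real.sqrt (b ^ 2 + Real.sin t ^ 2)) := by
  have hπ := Real.pi_pos
  have hWc := W_continuous b hb
  have hgc : Continuous (fun t => Real.cos (t / 2) * W b (Real.sin t)) :=
    (Real.continuous_cos.comp (continuous_id.div_const 2)).mul (hWc.comp Real.continuous_sin)
  have hsc : Continuous (fun t => Real.sin (t / 2) * W b (Real.sin t)) :=
    (Real.continuous_sin.comp (continuous_id.div_const 2)).mul (hWc.comp Real.continuous_sin)
  -- rewrite the RHS integrand
  have hR1 : (∫ t in Set.Ioo (0:ℝ) (π/2),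
        (1 / Real.sin (t / 2) + 1 / Real.cos (t / 2)) *
          Real.sqrt (1 - b / Real.sqrt (b ^ 2 + Real.sin t ^ 2)))
      = ∫ t in Set.Ioo (0:ℝ) (π/2),
          (2 / b) * ((Real.sin (t / 2) + Real.cos (t / 2)) * W b (Real.sin t)) :=
    setIntegral_congr_fun measurableSet_Ioo fun t ht => rhs_integrand b hb ht
  have hio : ∀ (F : ℝ → ℝ), ∫ t in Set.Ioo (0:ℝ) (π/2), F t = ∫ t in (0:ℝ)..(π/2), F t := by
    intro F
    rw [intervalIntegral.integral_of_le (by linarith), integral_Ioc_eq_integral_Ioo]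
  -- reflection: the sine part equals the cosine part on the other half interval
  have hsin_part : (∫ t in (0:ℝ)..(π/2), Real.sin (t / 2) * W b (Real.sin t))
      = ∫ t in (π/2)..π, Real.cos (t / 2) * W b (Real.sin t) := by
    have hfun : ∀ t : ℝ, Real.sin (t / 2) * W b (Real.sin t)
        = (fun u => Real.cos (u / 2) * W b (Real.sin u)) (π - t) := by
      intro t
      simp only
      rw [Real.sin_pi_sub, show (π - t) / 2 = π / 2 - t / 2 by ring, Real.cos_pi_div_two_sub]
    simp_rw [hfun]
    rw [intervalIntegral.integral_comp_sub_left (fun u => Real.cos (u / 2) * W b (Real.sin u)) π]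
    rw [show π - π/2 = π/2 by ring, sub_zero]
  have hadj : (∫ t in (0:ℝ)..(π/2), Real.cos (t / 2) * W b (Real.sin t))
        + ∫ t in (π/2)..π, Real.cos (t / 2) * W b (Real.sin t)
      = ∫ t in (0:ℝ)..π, Real.cos (t / 2) * W b (Real.sin t) :=
    intervalIntegral.integral_add_adjacent_intervals (hgc.intervalIntegrable _ _)
      (hgc.intervalIntegrable _ _)
  have hdouble : (∫ t in (0:ℝ)..π, Real.cos (t / 2) * W b (Real.sin t))
      = 2 * ∫ θ in (0:ℝ)..(π/2), Real.cos θ * W b (Real.sin (2 * θ)) := by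
    have h1 : ∀ θ : ℝ, Real.cos θ * W b (Real.sin (2 * θ))
        = (fun u => Real.cos (u / 2) * W b (Real.sin u)) (2 * θ) := by
      intro θ
      simp only
      rw [show 2 * θ / 2 = θ by ring]
    simp_rw [h1]
    rw [intervalIntegral.integral_comp_mul_left (fun u => Real.cos (u / 2) * W b (Real.sin u))
      (two_ne_zero), show (2:ℝ) * 0 = 0 by ring, show (2:ℝ) * (π/2) = π by ring,
      smul_eq_mul]
    ring
  -- the substitution x = tan θ for the LHS
  have himg : Real.tan '' (Set.Ioo 0 (π/2)) = Set.Ioi (0:ℝ) := by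
    ext y
    constructor
    · rintro ⟨θ, hθ, rfl⟩
      exact Real.tan_pos_of_pos_of_lt_pi_div_two hθ.1 hθ.2
    · intro hy
      refine ⟨Real.arctan y, ⟨?_, Real.arctan_lt_pi_div_two y⟩, Real.tan_arctan y⟩
      have h := Real.arctan_strictMono (show (0:ℝ) < y from hy)
      rwa [Real.arctan_zero] at h
  have hderiv : ∀ θ ∈ Set.Ioo (0:ℝ) (π/2),
      HasDerivWithinAt Real.tan (1 / Real.cos θ ^ 2) (Set.Ioo (0:ℝ) (π/2)) θ := fun θ hθ =>
    (Real.hasDerivAt_tan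
      (Real.cos_pos_of_mem_Ioo ⟨by linarith [hθ.1], hθ.2⟩).ne').hasDerivWithinAt
  have hinj : Set.InjOn Real.tan (Set.Ioo 0 (π/2)) :=
    Real.injOn_tan.mono (by
      intro x hx
      exact ⟨by linarith [hx.1], hx.2⟩)
  have hLHS : f (3/2) b = ∫ θ in Set.Ioo (0:ℝ) (π/2), Real.cos θ * W b (Real.sin (2 * θ)) := by
    rw [f, ← himg,
      integral_image_eq_integral_abs_deriv_smul measurableSet_Ioo hderiv hinj]
    exact setIntegral_congr_fun measurableSet_Ioo fun θ hθ => lhs_integrand b hb hθ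
  rw [hLHS, hR1, hio, hio]
  rw [intervalIntegral.integral_const_mul]
  have hsplit : (∫ t in (0:ℝ)..(π/2), (Real.sin (t / 2) + Real.cos (t / 2)) * W b (Real.sin t))
      = (∫ t in (0:ℝ)..(π/2), Real.sin (t / 2) * W b (Real.sin t))
        + ∫ t in (0:ℝ)..(π/2), Real.cos (t / 2) * W b (Real.sin t) := by
    simp_rw [add_mul]
    exact intervalIntegral.integral_add (hsc.intervalIntegrable _ _)
      (hgc.intervalIntegrable _ _)
  rw [hsplit, hsin_part, add_comm, hadj, hdouble]
  field_simp
  ring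
end
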